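/- Let S = S_{g,n} be a connected orientable surface of genus g ≥ 2 with empty boundary and n ≥ 0 punctures, and let C₁, C₂, C₃, C₄ be consecutive vertices of an alternating square in HT(S). Then the multicurve C₁ ∩ C₂ ∩ C₃ ∩ C₄ has cardinality g−2. -/

import Mathlib

namespace HTPaper

/-- Abstract model of a connected orientable surface `S_{g,n}` of genus `g` with `n` punctures
and empty boundary, together with the standard data on isotopy classes of essential simple
closed curves: geometric intersection numbers and the topology of complements of multicurves. -/
structure Surface where
  /-- genus -/
  g : ℕ
  /-- number of punctures -/
  n : ℕ
  /-- isotopy classes of essential simple closed curves -/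
  Curve : Type
  deceq : DecidableEq Curve
  /-- geometric intersection number -/
  inter : Curve → Curve → ℕ
  inter_symm : ∀ a b, inter a b = inter b a
  inter_self : ∀ a, inter a a = 0
  /-- number of connected components of the complement of a finite set of curves -/
  components : Finset Curve → ℕ
  /-- every connected component of the complement of the given set of curves has genus zero -/
  allComplGenusZero : Finset Curve → Prop
  /-- the boundary curve of a closed regular neighbourhood of a chain (of even length) -/
  chainBd : List Curve → Curve
  /-- the two curves are spherical-Farey neighbours of type A -/
  SFTypeA : Curve → Curve → Prop

attribute [instance] Surface.deceq

namespace Surface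

variable (S : Surface)

/-- a multicurve: a nonempty set of pairwise disjoint (distinct) curves -/
def IsMulticurve (M : Finset S.Curve) : Prop :=
  M.Nonempty ∧ (M : Set S.Curve).Pairwise fun a b => S.inter a b = 0

/-- the complement of the given set of curves is connected -/
def ComplConn (M : Finset S.Curve) : Prop := S.components M = 1

/-- a nonseparating curve -/
def Nonsep (a : S.Curve) : Prop := S.components {a} = 1

/-- a separating curve -/
def Separating (a : S.Curve) : Prop := S.components {a} ≠ 1

/-- a cut system: a multicurve of cardinality `g` with connected complement -/
def IsCutSystem (C : Finset S.Curve) : Prop :=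
  S.IsMulticurve C ∧ C.card = S.g ∧ S.ComplConn C

/-- elementary move: the two cut systems share exactly `g - 1` curves and the
remaining two curves intersect exactly once -/
def ElemMove (C₁ C₂ : Finset S.Curve) : Prop :=
  (C₁ ∩ C₂).card = S.g - 1 ∧ ∀ a ∈ C₁ \ C₂, ∀ b ∈ C₂ \ C₁, S.inter a b = 1

/-- adjacency in the Hatcher–Thurston graph `HT(S)` -/
def HTAdj (C₁ C₂ : Finset S.Curve) : Prop :=
  S.IsCutSystem C₁ ∧ S.IsCutSystem C₂ ∧ C₁ ≠ C₂ ∧ S.ElemMove C₁ C₂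

/-- `A ∼_C B` : `A` and `B` are in the same colour of `lk(C)` -/
def SameColour (C A B : Finset S.Curve) : Prop := A ∩ C = B ∩ C

/-- the two cut systems differ in exactly two curves -/
def DifferTwo (A B : Finset S.Curve) : Prop := (A \ B).card = 2 ∧ (B \ A).card = 2

/-- `C₁, C₂, C₃, C₄` are the consecutive vertices of an alternating square in `HT(S)` -/
def AltSquare (C₁ C₂ C₃ C₄ : Finset S.Curve) : Prop :=
  S.HTAdj C₁ C₂ ∧ S.HTAdj C₂ C₃ ∧ S.HTAdj C₃ C₄ ∧ S.HTAdj C₄ C₁ ∧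
  C₁ ≠ C₂ ∧ C₁ ≠ C₃ ∧ C₁ ≠ C₄ ∧ C₂ ≠ C₃ ∧ C₂ ≠ C₄ ∧ C₃ ≠ C₄ ∧
  ¬ S.SameColour C₂ C₁ C₃ ∧ ¬ S.SameColour C₃ C₂ C₄

/-- a triangle in `HT(S)`: three distinct cut systems pairwise spanning edges -/
def IsTriangle (T : Finset (Finset S.Curve)) : Prop :=
  T.card = 3 ∧ ∀ A ∈ T, ∀ B ∈ T, A ≠ B → S.HTAdj A B

/-- a pants decomposition: a maximal multicurve -/
def IsPants (P : Finset S.Curve) : Prop :=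
  S.IsMulticurve P ∧ ∀ Q, S.IsMulticurve Q → P ⊆ Q → Q = P

/-- a halving multicurve: `g + 1` nonseparating curves cutting the surface into two
genus-zero connected components -/
def IsHalving (H : Finset S.Curve) : Prop :=
  S.IsMulticurve H ∧ (∀ a ∈ H, S.Nonsep a) ∧ H.card = S.g + 1 ∧
  S.components H = 2 ∧ S.allComplGenusZero H

/-- a cutting halving multicurve: a halving multicurve any `g` elements of which
form a cut system -/
def IsCuttingHalving (H : Finset S.Curve) : Prop :=
  S.IsHalving H ∧ ∀ C ⊆ H, C.card = S.g → S.IsCutSystem C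

/-- a chain: consecutive curves intersect once, non-consecutive curves are disjoint -/
def IsChain (X : List S.Curve) : Prop :=
  X.Nodup ∧ ∀ j l : Fin X.length,
    ((j : ℕ) + 1 = (l : ℕ) → S.inter (X.get j) (X.get l) = 1) ∧
    ((j : ℕ) + 2 ≤ (l : ℕ) → S.inter (X.get j) (X.get l) = 0)

/-- a defining chain of a separating curve `β`: a chain (of even length) whose closed
regular neighbourhood has boundary curve `β` -/
def IsDefiningChain (X : List S.Curve) (β : S.Curve) : Prop :=
  S.IsChain X ∧ X.length % 2 = 0 ∧ 0 < X.length ∧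
  (∀ a ∈ X, a ≠ β ∧ S.inter a β = 0) ∧ S.chainBd X = β

end Surface

/-- a map of vertices of Hatcher–Thurston graphs: cut systems go to cut systems -/
def VertexMap (S₁ S₂ : Surface) (φ : Finset S₁.Curve → Finset S₂.Curve) : Prop :=
  ∀ C, S₁.IsCutSystem C → S₂.IsCutSystem (φ C)

/-- an edge-preserving map: distinct adjacent cut systems have distinct adjacent images -/
def EdgePreserving (S₁ S₂ : Surface) (φ : Finset S₁.Curve → Finset S₂.Curve) : Prop :=
  ∀ C₁ C₂, S₁.HTAdj C₁ C₂ → S₂.HTAdj (φ C₁) (φ C₂)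

/-- an alternating map: if `C₁, C₂ ∈ lk(C)` differ in exactly two curves then so do
their images -/
def Alternating (S₁ S₂ : Surface) (φ : Finset S₁.Curve → Finset S₂.Curve) : Prop :=
  ∀ C C₁ C₂, S₁.HTAdj C C₁ → S₁.HTAdj C C₂ → S₁.DifferTwo C₁ C₂ →
    S₂.DifferTwo (φ C₁) (φ C₂)

/-- the defining property of the map `ψ` induced on nonseparating curves: `ψ α` is the
(unique, by Theorem A) curve contained in `φ C` for every cut system `C` containing `α` -/
def InducedCurveMap (S₁ S₂ : Surface) (φ : Finset S₁.Curve → Finset S₂.Curve)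
    (ψ : S₁.Curve → S₂.Curve) : Prop :=
  ∀ α, S₁.Nonsep α → ∀ C, S₁.IsCutSystem C → α ∈ C → ψ α ∈ φ C

/-- Abstract model of the map `π_C` obtained by filling the punctures of `S₂` and identifying
the result with `S₁`. -/
structure Filling (S₂ S₁ : Surface) where
  /-- the induced map `π_C` on curves -/
  toFun : S₂.Curve → S₁.Curve
  nonsep : ∀ a, S₂.Nonsep a → S₁.Nonsep (toFun a)
  inter_le : ∀ a b, S₁.inter (toFun a) (toFun b) ≤ S₂.inter a b
  inter_one : ∀ a b, S₂.Nonsep a → S₂.Nonsep b → S₂.inter a b = 1 →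
    S₁.inter (toFun a) (toFun b) = 1
  /-- the induced map `π_HT` sends cut systems to cut systems -/
  cut : ∀ C, S₂.IsCutSystem C → S₁.IsCutSystem (C.image toFun)

/-- the action on curves of a (self-)homeomorphism of `S`: a bijection of curves preserving
intersection numbers and the topology of complements -/
structure Homeo (S : Surface) where
  toFun : S.Curve → S.Curve
  bij : Function.Bijective toFun
  inter_eq : ∀ a b, S.inter (toFun a) (toFun b) = S.inter a b
  components_eq : ∀ M : Finset S.Curve, S.components (M.image toFun) = S.components M

/-- the map `φ` on the Hatcher–Thurston graph is induced by a homeomorphism of `S` -/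
def InducedByHomeo (S : Surface) (φ : Finset S.Curve → Finset S.Curve) : Prop :=
  ∃ h : Homeo S, ∀ C, S.IsCutSystem C → φ C = C.image h.toFun

/-!
In `lk(C₂)`, `C₁ ≁ C₃` says that `C₁ ∩ C₂` and `C₃ ∩ C₂` are distinct `(g - 1)`-element subsets
of the `g`-element set `C₂`, so they share exactly `g - 2` curves. These curves also lie in `C₄`:
a curve `x ∈ C₁ ∩ C₃` outside `C₄` would be the curve that both `C₁` and `C₃` give up in their
elementary moves to `C₄`; the curve `y` gained from `C₃` meets `x` once, so it is not in `C₁`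
either, and then `C₁` and `C₃` differ from `C₄` in the same way, forcing `C₁ = C₃`.
-/

theorem _root_.Finset.card_inter_add_two_of_ne {α : Type*} [DecidableEq α] {A B D : Finset α}
    (hA : A ⊆ D) (hB : B ⊆ D) (hAcard : A.card + 1 = D.card) (hBcard : B.card + 1 = D.card)
    (hne : A ≠ B) : (A ∩ B).card + 2 = D.card := by
  have hunion : (A ∪ B).card = D.card := by
    have hlt : A.card < (A ∪ B).card := by
      refine Finset.card_lt_card (Finset.ssubset_iff_subset_ne.mpr ⟨Finset.subset_union_left, ?_⟩)
      intro hAB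
      have hBA : B ⊆ A := hAB ▸ Finset.subset_union_right
      exact hne (Finset.eq_of_subset_of_card_le hBA (by omega)).symm
    have hle := Finset.card_le_card (Finset.union_subset hA hB)
    omega
  have := Finset.card_union_add_card_inter A B
  omega

theorem _root_.Finset.eq_of_mem_of_card_eq_one {α : Type*} {s : Finset α} {a : α}
    (hs : s.card = 1) (ha : a ∈ s) : s = {a} := by
  obtain ⟨b, rfl⟩ := Finset.card_eq_one.mp hs
  rw [Finset.mem_singleton.mp ha]

namespace Surface

variable {S : Surface} {A B : Finset S.Curve}

theorem HTAdj.symm (h : S.HTAdj A B) : S.HTAdj B A := by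
  obtain ⟨hA, hB, hne, hcard, hinter⟩ := h
  refine ⟨hB, hA, hne.symm, Finset.inter_comm A B ▸ hcard, fun b hb a ha => ?_⟩
  rw [S.inter_symm]
  exact hinter a ha b hb

theorem HTAdj.card_sdiff (h : S.HTAdj A B) : (A \ B).card = 1 := by
  obtain ⟨⟨⟨hAne, -⟩, hAcard, -⟩, -, -, hcard, -⟩ := h
  have hpos := hAne.card_pos
  have := Finset.card_sdiff_add_card_inter A B
  omega

theorem HTAdj.card_inter_add_one (h : S.HTAdj A B) : (A ∩ B).card + 1 = B.card := by
  have hsdiff := h.symm.card_sdiff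
  have := Finset.card_sdiff_add_card_inter B A
  rw [Finset.inter_comm] at this
  omega

theorem mem_of_htAdj_of_htAdj {C C₁ C₃ : Finset S.Curve} {x : S.Curve}
    (h₁ : S.HTAdj C₁ C) (h₃ : S.HTAdj C₃ C) (hne : C₁ ≠ C₃) (hx₁ : x ∈ C₁) (hx₃ : x ∈ C₃) :
    x ∈ C := by
  by_contra hx
  have hC₁ : C₁ \ C = {x} := Finset.eq_of_mem_of_card_eq_one h₁.card_sdiff (by simp [hx₁, hx])
  have hC₃ : C₃ \ C = {x} := Finset.eq_of_mem_of_card_eq_one h₃.card_sdiff (by simp [hx₃, hx])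
  obtain ⟨y, hy⟩ := Finset.card_eq_one.mp h₃.symm.card_sdiff
  obtain ⟨hyC, hy₃⟩ := Finset.mem_sdiff.mp (hy ▸ Finset.mem_singleton_self y)
  have hxy : S.inter x y = 1 := h₃.2.2.2.2 x (by simp [hC₃]) y (by simp [hy])
  have hy₁ : y ∉ C₁ := fun hy₁ => by
    have := h₁.1.1.2 hx₁ hy₁ (fun hxy' => hy₃ (hxy' ▸ hx₃))
    omega
  have hC₁' : C \ C₁ = {y} :=
    Finset.eq_of_mem_of_card_eq_one h₁.symm.card_sdiff (by simp [hyC, hy₁])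
  refine hne ((symmDiff_left_inj (b := C)).mp ?_)
  rw [Finset.symmDiff_def, Finset.symmDiff_def, hC₁, hC₃, hC₁', hy]

end Surface

theorem lemma_altsquare_card_general (S : Surface)
    (C₁ C₂ C₃ C₄ : Finset S.Curve) (h : S.AltSquare C₁ C₂ C₃ C₄) :
    (C₁ ∩ C₂ ∩ C₃ ∩ C₄).card = S.g - 2 := by
  obtain ⟨h₁₂, h₂₃, h₃₄, h₄₁, -, h₁₃, -, -, -, -, hcolour, -⟩ := h
  have hsub : C₁ ∩ C₂ ∩ C₃ ⊆ C₄ := fun x hx => by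
    simp only [Finset.mem_inter] at hx
    exact Surface.mem_of_htAdj_of_htAdj h₄₁.symm h₃₄ h₁₃ hx.1.1 hx.2
  have hcard := Finset.card_inter_add_two_of_ne Finset.inter_subset_right
    Finset.inter_subset_right h₁₂.card_inter_add_one h₂₃.symm.card_inter_add_one hcolour
  have hassoc : C₁ ∩ C₂ ∩ (C₃ ∩ C₂) = C₁ ∩ C₂ ∩ C₃ := by
    ext; simp only [Finset.mem_inter]; tauto
  rw [Finset.inter_eq_left.mpr hsub, ← hassoc, ← h₂₃.1.2.1]
  omega

/-- If `C₁, C₂, C₃, C₄` are consecutive vertices of an alternating square in `HT(S)`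
(genus `g ≥ 2`), then `C₁ ∩ C₂ ∩ C₃ ∩ C₄` has cardinality `g − 2`. -/
theorem lemma_altsquare_card (S : Surface) (hg : 2 ≤ S.g)
    (C₁ C₂ C₃ C₄ : Finset S.Curve) (h : S.AltSquare C₁ C₂ C₃ C₄) :
    (C₁ ∩ C₂ ∩ C₃ ∩ C₄).card = S.g - 2 :=
  lemma_altsquare_card_general S C₁ C₂ C₃ C₄ h

end HTPaper
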